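/- Let S be a pseudogroup. For s,t ∈ S let X_s denote the set of completely prime filters containing s. Then X_s X_t = X_{st}, X_s⁻¹ = X_{s⁻¹}, X_s ∩ X_t = X_{s∧t}, and if s = ⋁ s_i then X_s = ⋃ X_{s_i}. -/
import Mathlib


class InvSemigroup (S : Type*) extends Mul S, Inv S where
  mul_assoc : ∀ a b c : S, a * b * c = a * (b * c)
  mul_inv_mul : ∀ a : S, a * a⁻¹ * a = a
  inv_mul_inv : ∀ a : S, a⁻¹ * a * a⁻¹ = a⁻¹
  idem_comm : ∀ e f : S, e * e = e → f * f = f → e * f = f * e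

class InvMonoid (S : Type*) extends InvSemigroup S, One S where
  one_mul : ∀ a : S, 1 * a = a
  mul_one : ∀ a : S, a * 1 = a

/-- The natural partial order on an inverse semigroup: `a ≤ b` iff `a = b * (a⁻¹ * a)`. -/
def nle {S : Type*} [InvSemigroup S] (a b : S) : Prop := a = b * (a⁻¹ * a)

def IsIdem {S : Type*} [Mul S] (e : S) : Prop := e * e = e

/-- Two elements are compatible if `a⁻¹ * b` and `a * b⁻¹` are idempotents. -/
def Compat {S : Type*} [InvSemigroup S] (a b : S) : Prop :=
  IsIdem (a⁻¹ * b) ∧ IsIdem (a * b⁻¹)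

def PairwiseCompat {S : Type*} [InvSemigroup S] (X : Set S) : Prop :=
  ∀ a ∈ X, ∀ b ∈ X, Compat a b

/-- `s` is the join (least upper bound) of `X` with respect to the natural partial order. -/
def IsJoin {S : Type*} [InvSemigroup S] (X : Set S) (s : S) : Prop :=
  (∀ a ∈ X, nle a s) ∧ ∀ u : S, (∀ a ∈ X, nle a u) → nle s u

/-- A pseudogroup: a complete infinitely distributive inverse monoid. Every
compatible subset has a join and multiplication distributes over such joins. -/
class Pseudogroup (S : Type*) extends InvMonoid S where
  join_exists : ∀ X : Set S, PairwiseCompat X → ∃ s : S, IsJoin X s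
  mul_join_left : ∀ (X : Set S) (s c : S), IsJoin X s → IsJoin ((fun x => c * x) '' X) (c * s)
  mul_join_right : ∀ (X : Set S) (s c : S), IsJoin X s → IsJoin ((fun x => x * c) '' X) (s * c)

/-- Filters: nonempty, upward closed, downward directed subsets. -/
def IsPFilter {S : Type*} [InvSemigroup S] (F : Set S) : Prop :=
  F.Nonempty ∧ (∀ a ∈ F, ∀ b : S, nle a b → b ∈ F) ∧
    (∀ a ∈ F, ∀ b ∈ F, ∃ c ∈ F, nle c a ∧ nle c b)

/-- A completely prime filter: whenever a join of a compatible family belongs to the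
filter, so does some member of the family. -/
def CompletelyPrime {S : Type*} [InvSemigroup S] (F : Set S) : Prop :=
  IsPFilter F ∧ ∀ (X : Set S) (s : S), PairwiseCompat X → IsJoin X s → s ∈ F →
    ∃ x ∈ X, x ∈ F

def setInv {S : Type*} [Inv S] (A : Set S) : Set S := {x | ∃ a ∈ A, x = a⁻¹}

def setMul {S : Type*} [Mul S] (A B : Set S) : Set S :=
  {x | ∃ a ∈ A, ∃ b ∈ B, x = a * b}

def upSet {S : Type*} [InvSemigroup S] (A : Set S) : Set S := {x | ∃ a ∈ A, nle a x}

/-- `X_s`: the set of completely prime filters containing `s`. -/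
def Xs {S : Type*} [Pseudogroup S] (s : S) : Set (Set S) :=
  {F | CompletelyPrime F ∧ s ∈ F}

/-- The domain and range of a filter. -/
def dF {S : Type*} [Pseudogroup S] (A : Set S) : Set S := upSet (setMul (setInv A) A)
def rF {S : Type*} [Pseudogroup S] (A : Set S) : Set S := upSet (setMul A (setInv A))

/-- Products of composable pairs of filters taken from two families. -/
def filtProd {S : Type*} [Pseudogroup S] (𝒜 ℬ : Set (Set S)) : Set (Set S) :=
  {C | ∃ A ∈ 𝒜, ∃ B ∈ ℬ, dF A = rF B ∧ C = upSet (setMul A B)}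

/-- `m` is the meet of `s` and `t` in the natural partial order. -/
def IsMeet {S : Type*} [InvSemigroup S] (s t m : S) : Prop :=
  nle m s ∧ nle m t ∧ ∀ x : S, nle x s → nle x t → nle x m


section Base
variable {S : Type*} [InvSemigroup S]

theorem massoc (a b c : S) : a * b * c = a * (b * c) := InvSemigroup.mul_assoc a b c
theorem aii (a : S) : a * a⁻¹ * a = a := InvSemigroup.mul_inv_mul a
theorem iai (a : S) : a⁻¹ * a * a⁻¹ = a⁻¹ := InvSemigroup.inv_mul_inv a

theorem idem_ia (a : S) : IsIdem (a⁻¹ * a) := by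
  show a⁻¹ * a * (a⁻¹ * a) = a⁻¹ * a
  rw [← massoc, iai]

theorem idem_ai (a : S) : IsIdem (a * a⁻¹) := by
  show a * a⁻¹ * (a * a⁻¹) = a * a⁻¹
  rw [← massoc, aii]

theorem idem_eq {e : S} (he : IsIdem e) : e * e = e := he

theorem icomm {e f : S} (he : IsIdem e) (hf : IsIdem f) : e * f = f * e :=
  InvSemigroup.idem_comm e f he hf

theorem idem_mul {e f : S} (he : IsIdem e) (hf : IsIdem f) : IsIdem (e * f) := by
  show e * f * (e * f) = e * f
  calc e * f * (e * f) = e * (f * e) * f := by simp [massoc]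
    _ = e * (e * f) * f := by rw [icomm hf he]
    _ = (e * e) * (f * f) := by simp [massoc]
    _ = e * f := by rw [idem_eq he, idem_eq hf]

theorem minv_unique {c x y : S} (h1 : c * x * c = c) (h2 : x * c * x = x)
    (h3 : c * y * c = c) (h4 : y * c * y = y) : x = y := by
  have hxc : IsIdem (x * c) := by show x * c * (x * c) = x * c; rw [← massoc, h2]
  have hyc : IsIdem (y * c) := by show y * c * (y * c) = y * c; rw [← massoc, h4]
  have hcx : IsIdem (c * x) := by show c * x * (c * x) = c * x; rw [massoc, ← massoc x c x, h2]
  have hcy : IsIdem (c * y) := by show c * y * (c * y) = c * y; rw [massoc, ← massoc y c y, h4]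
  have key : x = y * c * x := by
    conv_lhs => rw [← h2, ← h3]
    calc x * (c * y * c) * x = (x * c) * (y * c) * x := by simp [massoc]
      _ = (y * c) * (x * c) * x := by rw [icomm hxc hyc]
      _ = y * c * (x * c * x) := by simp [massoc]
      _ = y * c * x := by rw [h2]
  have key2 : y = y * c * x := by
    conv_lhs => rw [← h4, ← h1]
    calc y * (c * x * c) * y = y * ((c * x) * (c * y)) := by simp [massoc]
      _ = y * ((c * y) * (c * x)) := by rw [icomm hcx hcy]
      _ = (y * c * y) * (c * x) := by simp [massoc]
      _ = y * (c * x) := by rw [h4]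
      _ = y * c * x := by rw [massoc]
  rw [key, ← key2]

theorem my_inv_inv (a : S) : a⁻¹⁻¹ = a :=
  minv_unique (c := a⁻¹) (aii a⁻¹) (iai a⁻¹) (iai a) (aii a)

theorem idem_inv {e : S} (he : IsIdem e) : e⁻¹ = e :=
  minv_unique (c := e) (aii e) (iai e) (by rw [idem_eq he]; exact he) (by rw [idem_eq he]; exact he)

theorem mir (a b : S) : (a * b)⁻¹ = b⁻¹ * a⁻¹ := by
  refine minv_unique (c := a * b) (aii _) (iai _) ?_ ?_
  · calc a * b * (b⁻¹ * a⁻¹) * (a * b)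
        = a * ((b * b⁻¹) * (a⁻¹ * a)) * b := by simp [massoc]
      _ = a * ((a⁻¹ * a) * (b * b⁻¹)) * b := by rw [icomm (idem_ai b) (idem_ia a)]
      _ = (a * a⁻¹ * a) * (b * b⁻¹ * b) := by simp [massoc]
      _ = a * b := by rw [aii, aii]
  · calc b⁻¹ * a⁻¹ * (a * b) * (b⁻¹ * a⁻¹)
        = b⁻¹ * ((a⁻¹ * a) * (b * b⁻¹)) * a⁻¹ := by simp [massoc]
      _ = b⁻¹ * ((b * b⁻¹) * (a⁻¹ * a)) * a⁻¹ := by rw [icomm (idem_ia a) (idem_ai b)]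
      _ = (b⁻¹ * b * b⁻¹) * (a⁻¹ * a * a⁻¹) := by simp [massoc]
      _ = b⁻¹ * a⁻¹ := by rw [iai, iai]

theorem nle_refl (a : S) : nle a a := by
  show a = a * (a⁻¹ * a); rw [← massoc, aii]

theorem nle_of_idem_right {a b e : S} (he : IsIdem e) (h : a = b * e) : nle a b := by
  show a = b * (a⁻¹ * a)
  have h1 : a⁻¹ = e * b⁻¹ := by rw [h, mir, idem_inv he]
  rw [h1, h]
  symm
  calc b * (e * b⁻¹ * (b * e)) = (b * b⁻¹) * b * ((e * e) * e) := by
        rw [idem_eq he]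
        calc b * (e * b⁻¹ * (b * e)) = b * (e * (b⁻¹ * b)) * e := by simp [massoc]
          _ = b * ((b⁻¹ * b) * e) * e := by rw [icomm he (idem_ia b)]
          _ = (b * b⁻¹ * b) * (e * e) := by simp [massoc]
          _ = (b * b⁻¹) * b * (e * e) := by rw [← massoc]
    _ = b * e := by rw [aii, idem_eq he, idem_eq he]

theorem nle_of_idem_left {a b e : S} (he : IsIdem e) (h : a = e * b) : nle a b := by
  show a = b * (a⁻¹ * a)
  have h1 : a⁻¹ = b⁻¹ * e := by rw [h, mir, idem_inv he]
  rw [h1, h]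
  symm
  calc b * (b⁻¹ * e * (e * b)) = (b * b⁻¹) * (e * e) * b := by simp [massoc]
    _ = (b * b⁻¹) * e * b := by rw [idem_eq he]
    _ = e * (b * b⁻¹) * b := by rw [icomm (idem_ai b) he]
    _ = e * (b * b⁻¹ * b) := by simp [massoc]
    _ = e * b := by rw [aii]

theorem nle_left_form {a b : S} (h : nle a b) : a = (a * a⁻¹) * b := by
  have hh : a = b * (a⁻¹ * a) := h
  have h1 : a⁻¹ = (a⁻¹ * a) * b⁻¹ := by
    conv_lhs => rw [hh]
    rw [mir, idem_inv (idem_ia a)]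
  symm
  calc a * a⁻¹ * b = (b * (a⁻¹ * a)) * ((a⁻¹ * a) * b⁻¹) * b := by rw [← h1, ← hh]
    _ = b * ((a⁻¹ * a) * (a⁻¹ * a)) * (b⁻¹ * b) := by simp [massoc]
    _ = b * (a⁻¹ * a) * (b⁻¹ * b) := by rw [idem_eq (idem_ia a)]
    _ = b * ((a⁻¹ * a) * (b⁻¹ * b)) := by rw [massoc]
    _ = b * ((b⁻¹ * b) * (a⁻¹ * a)) := by rw [icomm (idem_ia a) (idem_ia b)]
    _ = (b * b⁻¹ * b) * (a⁻¹ * a) := by simp [massoc]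
    _ = b * (a⁻¹ * a) := by rw [aii]
    _ = a := hh.symm

theorem nle_trans {a b c : S} (h1 : nle a b) (h2 : nle b c) : nle a c := by
  have : a = c * ((b⁻¹ * b) * (a⁻¹ * a)) := by
    conv_lhs => rw [(h1 : a = b * (a⁻¹ * a)), (h2 : b = c * (b⁻¹ * b))]
    simp [massoc]
  exact nle_of_idem_right (idem_mul (idem_ia b) (idem_ia a)) this

theorem nle_mul_left (c : S) {a b : S} (h : nle a b) : nle (c * a) (c * b) := by
  refine nle_of_idem_right (idem_ia a) ?_
  conv_lhs => rw [(h : a = b * (a⁻¹ * a))]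
  simp [massoc]

theorem nle_mul_right (c : S) {a b : S} (h : nle a b) : nle (a * c) (b * c) := by
  refine nle_of_idem_left (idem_ai a) ?_
  conv_lhs => rw [nle_left_form h]
  simp [massoc]

theorem nle_mul {a b c d : S} (h1 : nle a b) (h2 : nle c d) : nle (a * c) (b * d) :=
  nle_trans (nle_mul_right c h1) (nle_mul_left b h2)

theorem nle_inv {a b : S} (h : nle a b) : nle a⁻¹ b⁻¹ := by
  refine nle_of_idem_left (idem_ia a) ?_
  conv_lhs => rw [(h : a = b * (a⁻¹ * a))]
  rw [mir, idem_inv (idem_ia a)]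

theorem nle_idem_mul_left {e : S} (he : IsIdem e) (b : S) : nle (e * b) b :=
  nle_of_idem_left he rfl

theorem nle_idem_mul_right {e : S} (he : IsIdem e) (b : S) : nle (b * e) b :=
  nle_of_idem_right he rfl

theorem idem_nle_eq {e f : S} (he : IsIdem e) (h : nle e f) : e = f * e := by
  have h' : e = f * (e⁻¹ * e) := h
  rwa [idem_inv he, idem_eq he] at h'

theorem idem_absorb {e c : S} (he : IsIdem e) (h : nle (c * c⁻¹) e) : e * c = c := by
  have h1 : c * c⁻¹ = e * (c * c⁻¹) := idem_nle_eq (idem_ai c) h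
  calc e * c = e * (c * c⁻¹ * c) := by rw [aii]
    _ = e * (c * c⁻¹) * c := by simp [massoc]
    _ = (c * c⁻¹) * c := by rw [← h1]
    _ = c := aii c

theorem isIdem_conj {e : S} (he : IsIdem e) (c : S) : IsIdem (c * e * c⁻¹) := by
  show c * e * c⁻¹ * (c * e * c⁻¹) = c * e * c⁻¹
  calc c * e * c⁻¹ * (c * e * c⁻¹)
      = c * (e * (c⁻¹ * c)) * (e * c⁻¹) := by simp [massoc]
    _ = c * ((c⁻¹ * c) * e) * (e * c⁻¹) := by rw [icomm he (idem_ia c)]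
    _ = (c * (c⁻¹ * c)) * ((e * e) * c⁻¹) := by simp [massoc]
    _ = (c * (c⁻¹ * c)) * (e * c⁻¹) := by rw [idem_eq he]
    _ = c * (e * c⁻¹) := by rw [← massoc c c⁻¹ c, aii]
    _ = c * e * c⁻¹ := by rw [massoc]

theorem isIdem_conj' {e : S} (he : IsIdem e) (c : S) : IsIdem (c⁻¹ * e * c) := by
  have := isIdem_conj he c⁻¹
  rwa [my_inv_inv] at this

theorem idem_sandwich {x y f : S} (hf : IsIdem f) (hxy : IsIdem (x⁻¹ * y)) :
    IsIdem (x⁻¹ * f * y) := by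
  have h : x⁻¹ * f * y = (x⁻¹ * f * x) * (x⁻¹ * y) := by
    calc x⁻¹ * f * y = (x⁻¹ * x * x⁻¹) * f * y := by rw [iai]
      _ = x⁻¹ * ((x * x⁻¹) * f) * y := by simp [massoc]
      _ = x⁻¹ * (f * (x * x⁻¹)) * y := by rw [icomm (idem_ai x) hf]
      _ = (x⁻¹ * f * x) * (x⁻¹ * y) := by simp [massoc]
  rw [h]
  exact idem_mul (isIdem_conj' hf x) hxy

theorem idem_sandwich' {x y f : S} (hf : IsIdem f) (hxy : IsIdem (x * y⁻¹)) :
    IsIdem (x * f * y⁻¹) := by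
  have := idem_sandwich (x := x⁻¹) (y := y⁻¹) hf (by rwa [my_inv_inv])
  rwa [my_inv_inv] at this

theorem compat_symm {a b : S} (h : Compat a b) : Compat b a := by
  obtain ⟨h1, h2⟩ := h
  constructor
  · have e : b⁻¹ * a = (a⁻¹ * b)⁻¹ := by rw [mir, my_inv_inv]
    rw [e, idem_inv h1]; exact h1
  · have e : b * a⁻¹ = (a * b⁻¹)⁻¹ := by rw [mir, my_inv_inv]
    rw [e, idem_inv h2]; exact h2

theorem compat_inv {a b : S} (h : Compat a b) : Compat a⁻¹ b⁻¹ := by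
  obtain ⟨h1, h2⟩ := h
  exact ⟨by rwa [my_inv_inv], by rwa [my_inv_inv]⟩

theorem compat_mul_left (c : S) {a b : S} (h : Compat a b) : Compat (c * a) (c * b) := by
  obtain ⟨h1, h2⟩ := h
  constructor
  · have e : (c * a)⁻¹ * (c * b) = a⁻¹ * (c⁻¹ * c) * b := by rw [mir]; simp [massoc]
    rw [e]; exact idem_sandwich (idem_ia c) h1
  · have e : (c * a) * (c * b)⁻¹ = c * (a * b⁻¹) * c⁻¹ := by rw [mir]; simp [massoc]
    rw [e]; exact isIdem_conj h2 c

theorem compat_mul_right (c : S) {a b : S} (h : Compat a b) : Compat (a * c) (b * c) := by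
  obtain ⟨h1, h2⟩ := h
  constructor
  · have e : (a * c)⁻¹ * (b * c) = c⁻¹ * (a⁻¹ * b) * c := by rw [mir]; simp [massoc]
    rw [e]; exact isIdem_conj' h1 c
  · have e : (a * c) * (b * c)⁻¹ = a * (c * c⁻¹) * b⁻¹ := by rw [mir]; simp [massoc]
    rw [e]; exact idem_sandwich' (idem_ai c) h2

theorem pc_inv {X : Set S} (h : PairwiseCompat X) : PairwiseCompat (setInv X) := by
  rintro _ ⟨a, ha, rfl⟩ _ ⟨b, hb, rfl⟩; exact compat_inv (h a ha b hb)

theorem pc_image_left (c : S) {X : Set S} (h : PairwiseCompat X) :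
    PairwiseCompat ((fun x => c * x) '' X) := by
  rintro _ ⟨a, ha, rfl⟩ _ ⟨b, hb, rfl⟩; exact compat_mul_left c (h a ha b hb)

theorem pc_image_right (c : S) {X : Set S} (h : PairwiseCompat X) :
    PairwiseCompat ((fun x => x * c) '' X) := by
  rintro _ ⟨a, ha, rfl⟩ _ ⟨b, hb, rfl⟩; exact compat_mul_right c (h a ha b hb)

theorem setInv_setInv (F : Set S) : setInv (setInv F) = F := by
  ext x; constructor
  · rintro ⟨y, ⟨a, ha, rfl⟩, rfl⟩; rwa [my_inv_inv]
  · intro hx; exact ⟨x⁻¹, ⟨x, hx, rfl⟩, (my_inv_inv x).symm⟩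

theorem isJoin_inv {X : Set S} {s : S} (h : IsJoin X s) : IsJoin (setInv X) s⁻¹ := by
  obtain ⟨h1, h2⟩ := h
  constructor
  · rintro y ⟨a, ha, rfl⟩; exact nle_inv (h1 a ha)
  · intro u hu
    have hs : nle s u⁻¹ := h2 u⁻¹ (fun a ha => by
      have h3 := nle_inv (hu a⁻¹ ⟨a, ha, rfl⟩)
      rwa [my_inv_inv] at h3)
    have h4 := nle_inv hs; rwa [my_inv_inv] at h4

theorem filter_lb3 {F : Set S} (hF : IsPFilter F) {a b c : S}
    (ha : a ∈ F) (hb : b ∈ F) (hc : c ∈ F) :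
    ∃ d ∈ F, nle d a ∧ nle d b ∧ nle d c := by
  obtain ⟨d, hd, hda, hdb⟩ := hF.2.2 a ha b hb
  obtain ⟨e, he, hed, hec⟩ := hF.2.2 d hd c hc
  exact ⟨e, he, nle_trans hed hda, nle_trans hed hdb, hec⟩

theorem isPFilter_inv {F : Set S} (h : IsPFilter F) : IsPFilter (setInv F) := by
  obtain ⟨⟨w, hw⟩, hup, hdir⟩ := h
  refine ⟨⟨w⁻¹, ⟨w, hw, rfl⟩⟩, ?_, ?_⟩
  · rintro _ ⟨a, ha, rfl⟩ b hb
    have hab : nle a b⁻¹ := by have h3 := nle_inv hb; rwa [my_inv_inv] at h3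
    exact ⟨b⁻¹, hup a ha b⁻¹ hab, (my_inv_inv b).symm⟩
  · rintro _ ⟨a, ha, rfl⟩ _ ⟨b, hb, rfl⟩
    obtain ⟨c, hc, h1, h2⟩ := hdir a ha b hb
    exact ⟨c⁻¹, ⟨c, hc, rfl⟩, nle_inv h1, nle_inv h2⟩

theorem cp_invF {F : Set S} (h : CompletelyPrime F) : CompletelyPrime (setInv F) := by
  refine ⟨isPFilter_inv h.1, ?_⟩
  rintro X s hX hs ⟨a, ha, rfl⟩
  have hs' : IsJoin (setInv X) a⁻¹⁻¹ := isJoin_inv hs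
  rw [my_inv_inv] at hs'
  obtain ⟨y, ⟨x, hx, rfl⟩, hyF⟩ := h.2 (setInv X) a (pc_inv hX) hs' ha
  exact ⟨x, hx, ⟨x⁻¹, hyF, (my_inv_inv x).symm⟩⟩

theorem absorb_right {g s t : S} (h : nle g (s * t)) : g * (t⁻¹ * t) = g := by
  have he : g = s * t * (g⁻¹ * g) := h
  conv_lhs => rw [he]
  calc s * t * (g⁻¹ * g) * (t⁻¹ * t)
      = s * t * ((g⁻¹ * g) * (t⁻¹ * t)) := by rw [massoc]
    _ = s * t * ((t⁻¹ * t) * (g⁻¹ * g)) := by rw [icomm (idem_ia g) (idem_ia t)]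
    _ = s * (t * t⁻¹ * t) * (g⁻¹ * g) := by simp [massoc]
    _ = s * t * (g⁻¹ * g) := by rw [aii]
    _ = g := he.symm

theorem absorb_left {g s t : S} (h : nle g (s * t)) : (s * s⁻¹) * g = g := by
  have he : g = (g * g⁻¹) * (s * t) := nle_left_form h
  conv_lhs => rw [he]
  calc (s * s⁻¹) * ((g * g⁻¹) * (s * t))
      = (s * s⁻¹) * (g * g⁻¹) * (s * t) := by rw [← massoc]
    _ = (g * g⁻¹) * (s * s⁻¹) * (s * t) := by rw [icomm (idem_ai s) (idem_ai g)]
    _ = (g * g⁻¹) * ((s * s⁻¹ * s) * t) := by simp [massoc]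
    _ = (g * g⁻¹) * (s * t) := by rw [aii]
    _ = g := he.symm

theorem self_sandwich {g w : S} (h : nle g w) : g * (w⁻¹ * g) = g := by
  have he : g = w * (g⁻¹ * g) := h
  conv_lhs => rw [he]
  calc w * (g⁻¹ * g) * (w⁻¹ * (w * (g⁻¹ * g)))
      = w * ((g⁻¹ * g) * (w⁻¹ * w)) * (g⁻¹ * g) := by simp [massoc]
    _ = w * ((w⁻¹ * w) * (g⁻¹ * g)) * (g⁻¹ * g) := by rw [icomm (idem_ia g) (idem_ia w)]
    _ = (w * w⁻¹ * w) * ((g⁻¹ * g) * (g⁻¹ * g)) := by simp [massoc]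
    _ = w * (g⁻¹ * g) := by rw [aii, idem_eq (idem_ia g)]
    _ = g := he.symm

theorem keyR {g s t : S} (h : nle g (s * t)) :
    nle (s⁻¹ * (g * g⁻¹) * s) (t * (g⁻¹ * g) * t⁻¹) := by
  have he : g = s * t * (g⁻¹ * g) := h
  have e1 : g * g⁻¹ = (s * t * (g⁻¹ * g)) * ((g⁻¹ * g) * (t⁻¹ * s⁻¹)) := by
    conv_lhs => rw [he]
    rw [mir (s * t) (g⁻¹ * g), idem_inv (idem_ia g), mir s t]
  have e2 : g * g⁻¹ = s * (t * (g⁻¹ * g) * t⁻¹) * s⁻¹ := by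
    rw [e1]
    calc (s * t * (g⁻¹ * g)) * ((g⁻¹ * g) * (t⁻¹ * s⁻¹))
        = s * (t * (((g⁻¹ * g) * (g⁻¹ * g)) * t⁻¹)) * s⁻¹ := by simp [massoc]
      _ = s * (t * ((g⁻¹ * g) * t⁻¹)) * s⁻¹ := by rw [idem_eq (idem_ia g)]
      _ = s * (t * (g⁻¹ * g) * t⁻¹) * s⁻¹ := by simp [massoc]
  have e3 : s⁻¹ * (g * g⁻¹) * s = (t * (g⁻¹ * g) * t⁻¹) * (s⁻¹ * s) := by
    rw [e2]
    calc s⁻¹ * (s * (t * (g⁻¹ * g) * t⁻¹) * s⁻¹) * s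
        = (s⁻¹ * s) * (t * (g⁻¹ * g) * t⁻¹) * (s⁻¹ * s) := by simp [massoc]
      _ = (t * (g⁻¹ * g) * t⁻¹) * (s⁻¹ * s) * (s⁻¹ * s) := by
          rw [icomm (idem_ia s) (isIdem_conj (idem_ia g) t)]
      _ = (t * (g⁻¹ * g) * t⁻¹) * ((s⁻¹ * s) * (s⁻¹ * s)) := by rw [massoc]
      _ = (t * (g⁻¹ * g) * t⁻¹) * (s⁻¹ * s) := by rw [idem_eq (idem_ia s)]
  exact nle_of_idem_right (idem_ia s) e3

theorem keyL {g s t : S} (h : nle g (s * t)) :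
    nle (t * (g⁻¹ * g) * t⁻¹) (s⁻¹ * (g * g⁻¹) * s) := by
  have he : g = (g * g⁻¹) * (s * t) := nle_left_form h
  have e1 : g⁻¹ * g = ((t⁻¹ * s⁻¹) * (g * g⁻¹)) * ((g * g⁻¹) * (s * t)) := by
    conv_lhs => rw [he]
    rw [mir (g * g⁻¹) (s * t), idem_inv (idem_ai g), mir s t]
  have e2 : g⁻¹ * g = t⁻¹ * (s⁻¹ * (g * g⁻¹) * s) * t := by
    rw [e1]
    calc ((t⁻¹ * s⁻¹) * (g * g⁻¹)) * ((g * g⁻¹) * (s * t))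
        = t⁻¹ * (s⁻¹ * (((g * g⁻¹) * (g * g⁻¹)) * s)) * t := by simp [massoc]
      _ = t⁻¹ * (s⁻¹ * ((g * g⁻¹) * s)) * t := by rw [idem_eq (idem_ai g)]
      _ = t⁻¹ * (s⁻¹ * (g * g⁻¹) * s) * t := by simp [massoc]
  have e3 : t * (g⁻¹ * g) * t⁻¹ = (s⁻¹ * (g * g⁻¹) * s) * (t * t⁻¹) := by
    rw [e2]
    calc t * (t⁻¹ * (s⁻¹ * (g * g⁻¹) * s) * t) * t⁻¹
        = (t * t⁻¹) * (s⁻¹ * (g * g⁻¹) * s) * (t * t⁻¹) := by simp [massoc]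
      _ = (s⁻¹ * (g * g⁻¹) * s) * (t * t⁻¹) * (t * t⁻¹) := by
          rw [icomm (idem_ai t) (isIdem_conj' (idem_ai g) s)]
      _ = (s⁻¹ * (g * g⁻¹) * s) * ((t * t⁻¹) * (t * t⁻¹)) := by rw [massoc]
      _ = (s⁻¹ * (g * g⁻¹) * s) * (t * t⁻¹) := by rw [idem_eq (idem_ai t)]
  exact nle_of_idem_right (idem_ai t) e3

end Base


section PG
variable {S : Type*} [Pseudogroup S]

theorem prodCP {A B : Set S} (hA : CompletelyPrime A) (hB : CompletelyPrime B)
    (hd : dF A = rF B) : CompletelyPrime (upSet (setMul A B)) := by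
  obtain ⟨⟨⟨a0, ha0⟩, hAup, hAdir⟩, hAp⟩ := hA
  obtain ⟨⟨⟨b0, hb0⟩, hBup, hBdir⟩, hBp⟩ := hB
  constructor
  · refine ⟨⟨a0 * b0, ⟨a0 * b0, ⟨a0, ha0, b0, hb0, rfl⟩, nle_refl _⟩⟩, ?_, ?_⟩
    · rintro x ⟨z, hz, hzx⟩ y hxy; exact ⟨z, hz, nle_trans hzx hxy⟩
    · rintro x ⟨z1, ⟨a1, ha1, b1, hb1, rfl⟩, h1⟩ y ⟨z2, ⟨a2, ha2, b2, hb2, rfl⟩, h2⟩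
      obtain ⟨a, haA, haa1, haa2⟩ := hAdir a1 ha1 a2 ha2
      obtain ⟨b, hbB, hbb1, hbb2⟩ := hBdir b1 hb1 b2 hb2
      exact ⟨a * b, ⟨a * b, ⟨a, haA, b, hbB, rfl⟩, nle_refl _⟩,
        nle_trans (nle_mul haa1 hbb1) h1, nle_trans (nle_mul haa2 hbb2) h2⟩
  · rintro X w hX hjoin ⟨z, ⟨a, haA, b, hbB, rfl⟩, hab⟩
    have hmem : (a⁻¹ * a) ∈ rF B := by
      rw [← hd]
      exact ⟨a⁻¹ * a, ⟨a⁻¹, ⟨a, haA, rfl⟩, a, haA, rfl⟩, nle_refl _⟩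
    obtain ⟨p, ⟨b1, hb1, q, ⟨b2, hb2, rfl⟩, rfl⟩, hple⟩ := hmem
    obtain ⟨c1, hc1, h11, h12⟩ := hBdir b1 hb1 b2 hb2
    obtain ⟨c, hcB, hcc1, hcb⟩ := hBdir c1 hc1 b hbB
    have hcc : nle (c * c⁻¹) (a⁻¹ * a) :=
      nle_trans (nle_mul (nle_trans hcc1 h11) (nle_inv (nle_trans hcc1 h12))) hple
    have heq : (a⁻¹ * a) * c = c := idem_absorb (idem_ia a) hcc
    have h2 : nle (a * c) w := nle_trans (nle_mul_left a hcb) hab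
    have h3 := nle_mul_left a⁻¹ h2
    rw [← massoc, heq] at h3
    have hwB : a⁻¹ * w ∈ B := hBup c hcB _ h3
    obtain ⟨y, ⟨x, hx, rfl⟩, hyB⟩ := hBp _ _ (pc_image_left a⁻¹ hX)
      (Pseudogroup.mul_join_left X w a⁻¹ hjoin) hwB
    exact ⟨x, hx, ⟨a * (a⁻¹ * x), ⟨a, haA, a⁻¹ * x, hyB, rfl⟩,
      nle_of_idem_left (idem_ai a) (massoc a a⁻¹ x).symm⟩⟩

theorem Acp {F : Set S} {s t : S} (hF : CompletelyPrime F) (hst : s * t ∈ F) :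
    CompletelyPrime (upSet (setMul F ({t⁻¹} : Set S))) := by
  obtain ⟨⟨hFne, hFup, hFdir⟩, hFp⟩ := hF
  constructor
  · refine ⟨⟨(s * t) * t⁻¹, ⟨(s * t) * t⁻¹, ⟨s * t, hst, t⁻¹, rfl, rfl⟩, nle_refl _⟩⟩, ?_, ?_⟩
    · rintro x ⟨z, hz, hzx⟩ y hxy; exact ⟨z, hz, nle_trans hzx hxy⟩
    · rintro x ⟨z1, ⟨f1, hf1, w1, rfl, rfl⟩, h1⟩ y ⟨z2, ⟨f2, hf2, w2, rfl, rfl⟩, h2⟩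
      obtain ⟨g, hg, hgf1, hgf2⟩ := hFdir f1 hf1 f2 hf2
      exact ⟨g * t⁻¹, ⟨g * t⁻¹, ⟨g, hg, t⁻¹, rfl, rfl⟩, nle_refl _⟩,
        nle_trans (nle_mul_right t⁻¹ hgf1) h1, nle_trans (nle_mul_right t⁻¹ hgf2) h2⟩
  · rintro X w hX hjoin ⟨z, ⟨f, hf, w1, rfl, rfl⟩, hfw⟩
    obtain ⟨g, hg, hgf, hgst⟩ := hFdir f hf (s * t) hst
    have h5 := nle_mul_right (t⁻¹ * t) hgf
    rw [absorb_right hgst] at h5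
    rw [← massoc] at h5
    have h6 : nle g (w * t) := nle_trans h5 (nle_mul_right t hfw)
    have h7 : w * t ∈ F := hFup g hg _ h6
    obtain ⟨y, ⟨x, hx, rfl⟩, hyF⟩ := hFp _ _ (pc_image_right t hX)
      (Pseudogroup.mul_join_right X w t hjoin) h7
    exact ⟨x, hx, ⟨(x * t) * t⁻¹, ⟨x * t, hyF, t⁻¹, rfl, rfl⟩,
      nle_of_idem_right (idem_ai t) (massoc x t t⁻¹)⟩⟩

theorem Bcp {F : Set S} {s t : S} (hF : CompletelyPrime F) (hst : s * t ∈ F) :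
    CompletelyPrime (upSet (setMul ({s⁻¹} : Set S) F)) := by
  obtain ⟨⟨hFne, hFup, hFdir⟩, hFp⟩ := hF
  constructor
  · refine ⟨⟨s⁻¹ * (s * t), ⟨s⁻¹ * (s * t), ⟨s⁻¹, rfl, s * t, hst, rfl⟩, nle_refl _⟩⟩, ?_, ?_⟩
    · rintro x ⟨z, hz, hzx⟩ y hxy; exact ⟨z, hz, nle_trans hzx hxy⟩
    · rintro x ⟨z1, ⟨w1, rfl, f1, hf1, rfl⟩, h1⟩ y ⟨z2, ⟨w2, rfl, f2, hf2, rfl⟩, h2⟩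
      obtain ⟨g, hg, hgf1, hgf2⟩ := hFdir f1 hf1 f2 hf2
      exact ⟨s⁻¹ * g, ⟨s⁻¹ * g, ⟨s⁻¹, rfl, g, hg, rfl⟩, nle_refl _⟩,
        nle_trans (nle_mul_left s⁻¹ hgf1) h1, nle_trans (nle_mul_left s⁻¹ hgf2) h2⟩
  · rintro X w hX hjoin ⟨z, ⟨w1, rfl, f, hf, rfl⟩, hfw⟩
    obtain ⟨g, hg, hgf, hgst⟩ := hFdir f hf (s * t) hst
    have h5 := nle_mul_left (s * s⁻¹) hgf
    rw [absorb_left hgst] at h5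
    rw [massoc] at h5
    have h6 : nle g (s * w) := nle_trans h5 (nle_mul_left s hfw)
    have h7 : s * w ∈ F := hFup g hg _ h6
    obtain ⟨y, ⟨x, hx, rfl⟩, hyF⟩ := hFp _ _ (pc_image_left s hX)
      (Pseudogroup.mul_join_left X w s hjoin) h7
    exact ⟨x, hx, ⟨s⁻¹ * (s * x), ⟨s⁻¹, rfl, s * x, hyF, rfl⟩,
      nle_of_idem_left (idem_ia s) (massoc s⁻¹ s x).symm⟩⟩

theorem dAB {F : Set S} {s t : S} (hF : CompletelyPrime F) (hst : s * t ∈ F) :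
    dF (upSet (setMul F ({t⁻¹} : Set S))) = rF (upSet (setMul ({s⁻¹} : Set S) F)) := by
  obtain ⟨hFfil, hFp⟩ := hF
  have hmemA : ∀ f ∈ F, f * t⁻¹ ∈ upSet (setMul F ({t⁻¹} : Set S)) :=
    fun f hf => ⟨f * t⁻¹, ⟨f, hf, t⁻¹, rfl, rfl⟩, nle_refl _⟩
  have hmemB : ∀ f ∈ F, s⁻¹ * f ∈ upSet (setMul ({s⁻¹} : Set S) F) :=
    fun f hf => ⟨s⁻¹ * f, ⟨s⁻¹, rfl, f, hf, rfl⟩, nle_refl _⟩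
  ext x; constructor
  · rintro ⟨z, ⟨p, ⟨u, huA, rfl⟩, v, hvA, rfl⟩, hzx⟩
    obtain ⟨z1, ⟨f1, hf1, w1, rfl, rfl⟩, hu⟩ := huA
    obtain ⟨z2, ⟨f2, hf2, w2, rfl, rfl⟩, hv⟩ := hvA
    obtain ⟨g, hg, hgf1, hgf2, hgst⟩ := filter_lb3 hFfil hf1 hf2 hst
    have hq : (s⁻¹ * g) * (s⁻¹ * g)⁻¹ = s⁻¹ * (g * g⁻¹) * s := by
      rw [mir, my_inv_inv]; simp [massoc]
    have h1 : nle ((s⁻¹ * g) * (s⁻¹ * g)⁻¹) (t * (g⁻¹ * g) * t⁻¹) := by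
      rw [hq]; exact keyR hgst
    have h2 : nle (t * (g⁻¹ * g) * t⁻¹) ((f1 * t⁻¹)⁻¹ * (f2 * t⁻¹)) := by
      have h3 : nle (t * (g⁻¹ * g) * t⁻¹) (t * (f1⁻¹ * f2) * t⁻¹) :=
        nle_mul_right t⁻¹ (nle_mul_left t (nle_mul (nle_inv hgf1) hgf2))
      have h4 : t * (f1⁻¹ * f2) * t⁻¹ = (f1 * t⁻¹)⁻¹ * (f2 * t⁻¹) := by
        rw [mir, my_inv_inv]; simp [massoc]
      rwa [h4] at h3
    have h5 : nle ((f1 * t⁻¹)⁻¹ * (f2 * t⁻¹)) (u⁻¹ * v) := nle_mul (nle_inv hu) hv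
    exact ⟨(s⁻¹ * g) * (s⁻¹ * g)⁻¹,
      ⟨s⁻¹ * g, hmemB g hg, (s⁻¹ * g)⁻¹, ⟨s⁻¹ * g, hmemB g hg, rfl⟩, rfl⟩,
      nle_trans h1 (nle_trans h2 (nle_trans h5 hzx))⟩
  · rintro ⟨z, ⟨u, huB, p, ⟨v, hvB, rfl⟩, rfl⟩, hzx⟩
    obtain ⟨z1, ⟨w1, rfl, f1, hf1, rfl⟩, hu⟩ := huB
    obtain ⟨z2, ⟨w2, rfl, f2, hf2, rfl⟩, hv⟩ := hvB
    obtain ⟨g, hg, hgf1, hgf2, hgst⟩ := filter_lb3 hFfil hf1 hf2 hst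
    have hq : (g * t⁻¹)⁻¹ * (g * t⁻¹) = t * (g⁻¹ * g) * t⁻¹ := by
      rw [mir, my_inv_inv]; simp [massoc]
    have h1 : nle ((g * t⁻¹)⁻¹ * (g * t⁻¹)) (s⁻¹ * (g * g⁻¹) * s) := by
      rw [hq]; exact keyL hgst
    have h2 : nle (s⁻¹ * (g * g⁻¹) * s) ((s⁻¹ * f1) * (s⁻¹ * f2)⁻¹) := by
      have h3 : nle (s⁻¹ * (g * g⁻¹) * s) (s⁻¹ * (f1 * f2⁻¹) * s) :=
        nle_mul_right s (nle_mul_left s⁻¹ (nle_mul hgf1 (nle_inv hgf2)))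
      have h4 : s⁻¹ * (f1 * f2⁻¹) * s = (s⁻¹ * f1) * (s⁻¹ * f2)⁻¹ := by
        rw [mir, my_inv_inv]; simp [massoc]
      rwa [h4] at h3
    have h5 : nle ((s⁻¹ * f1) * (s⁻¹ * f2)⁻¹) (u * v⁻¹) := nle_mul hu (nle_inv hv)
    exact ⟨(g * t⁻¹)⁻¹ * (g * t⁻¹),
      ⟨(g * t⁻¹)⁻¹, ⟨g * t⁻¹, hmemA g hg, rfl⟩, g * t⁻¹, hmemA g hg, rfl⟩,
      nle_trans h1 (nle_trans h2 (nle_trans h5 hzx))⟩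

theorem FAB {F : Set S} {s t : S} (hF : CompletelyPrime F) (hst : s * t ∈ F) :
    F = upSet (setMul (upSet (setMul F ({t⁻¹} : Set S)))
      (upSet (setMul ({s⁻¹} : Set S) F))) := by
  obtain ⟨⟨hFne, hFup, hFdir⟩, hFp⟩ := hF
  ext x; constructor
  · intro hx
    obtain ⟨g, hg, hgx, hgst⟩ := hFdir x hx (s * t) hst
    have hsand : (g * t⁻¹) * (s⁻¹ * g) = g := by
      have h0 : (g * t⁻¹) * (s⁻¹ * g) = g * ((s * t)⁻¹ * g) := by rw [mir]; simp [massoc]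
      rw [h0, self_sandwich hgst]
    refine ⟨(g * t⁻¹) * (s⁻¹ * g),
      ⟨g * t⁻¹, ⟨g * t⁻¹, ⟨g, hg, t⁻¹, rfl, rfl⟩, nle_refl _⟩,
       s⁻¹ * g, ⟨s⁻¹ * g, ⟨s⁻¹, rfl, g, hg, rfl⟩, nle_refl _⟩, rfl⟩, ?_⟩
    rw [hsand]; exact hgx
  · rintro ⟨z, ⟨u, huA, v, hvB, rfl⟩, hzx⟩
    obtain ⟨z1, ⟨f1, hf1, w1, rfl, rfl⟩, hu⟩ := huA
    obtain ⟨z2, ⟨w2, rfl, f2, hf2, rfl⟩, hv⟩ := hvB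
    obtain ⟨g, hg, hgf1, hgf2, hgst⟩ := filter_lb3 ⟨hFne, hFup, hFdir⟩ hf1 hf2 hst
    have hsand : (g * t⁻¹) * (s⁻¹ * g) = g := by
      have h0 : (g * t⁻¹) * (s⁻¹ * g) = g * ((s * t)⁻¹ * g) := by rw [mir]; simp [massoc]
      rw [h0, self_sandwich hgst]
    have h1 : nle ((g * t⁻¹) * (s⁻¹ * g)) (u * v) :=
      nle_mul (nle_trans (nle_mul_right t⁻¹ hgf1) hu) (nle_trans (nle_mul_left s⁻¹ hgf2) hv)
    rw [hsand] at h1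
    exact hFup g hg x (nle_trans h1 hzx)

end PG

/-- `X_s X_t = X_{st}`, `X_s⁻¹ = X_{s⁻¹}`, `X_s ∩ X_t = X_{s ∧ t}`, and if
`s = ⋁ sᵢ` then `X_s = ⋃ X_{sᵢ}`. -/
theorem stmt9 {S : Type*} [Pseudogroup S] :
    (∀ s t : S, filtProd (Xs s) (Xs t) = Xs (s * t)) ∧
    (∀ s : S, (fun A => setInv A) '' Xs s = Xs s⁻¹) ∧
    (∀ s t m : S, IsMeet s t m → Xs s ∩ Xs t = Xs m) ∧
    (∀ (X : Set S) (s : S), PairwiseCompat X → IsJoin X s →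
      Xs s = ⋃ x ∈ X, Xs x) := by
  refine ⟨?_, ?_, ?_, ?_⟩
  · intro s t
    ext C; constructor
    · rintro ⟨A, ⟨hA, hsA⟩, B, ⟨hB, htB⟩, hd, rfl⟩
      exact ⟨prodCP hA hB hd, ⟨s * t, ⟨s, hsA, t, htB, rfl⟩, nle_refl _⟩⟩
    · rintro ⟨hF, hstF⟩
      refine ⟨upSet (setMul C ({t⁻¹} : Set S)), ⟨Acp hF hstF, ?_⟩,
        upSet (setMul ({s⁻¹} : Set S) C), ⟨Bcp hF hstF, ?_⟩,
        dAB hF hstF, FAB hF hstF⟩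
      · exact ⟨(s * t) * t⁻¹, ⟨s * t, hstF, t⁻¹, rfl, rfl⟩,
          nle_of_idem_right (idem_ai t) (massoc s t t⁻¹)⟩
      · exact ⟨s⁻¹ * (s * t), ⟨s⁻¹, rfl, s * t, hstF, rfl⟩,
          nle_of_idem_left (idem_ia s) (massoc s⁻¹ s t).symm⟩
  · intro s
    ext F; constructor
    · rintro ⟨A, ⟨hA, hsA⟩, rfl⟩
      exact ⟨cp_invF hA, ⟨s, hsA, rfl⟩⟩
    · rintro ⟨hF, hsF⟩
      exact ⟨setInv F, ⟨cp_invF hF, ⟨s⁻¹, hsF, (my_inv_inv s).symm⟩⟩, setInv_setInv F⟩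
  · rintro s t m ⟨hms, hmt, hmin⟩
    ext F; constructor
    · rintro ⟨⟨hF, hsF⟩, ⟨-, htF⟩⟩
      obtain ⟨c, hc, hcs, hct⟩ := hF.1.2.2 s hsF t htF
      exact ⟨hF, hF.1.2.1 c hc m (hmin c hcs hct)⟩
    · rintro ⟨hF, hmF⟩
      exact ⟨⟨hF, hF.1.2.1 m hmF s hms⟩, ⟨hF, hF.1.2.1 m hmF t hmt⟩⟩
  · intro X s hX hjoin
    ext F
    simp only [Set.mem_iUnion]
    constructor
    · rintro ⟨hF, hsF⟩
      obtain ⟨x, hx, hxF⟩ := hF.2 X s hX hjoin hsF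
      exact ⟨x, hx, hF, hxF⟩
    · rintro ⟨x, hx, hF, hxF⟩
      exact ⟨hF, hF.1.2.1 x hxF s (hjoin.1 x hx)⟩
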